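/- arXiv:2103.07275 — 2 statements merged into one kernel-verified Lean document; each statement's English description precedes it below -/
import Mathlib

section
/- Let K* = Pᶠ·Hᵀ·(H·Pᶠ·Hᵀ + R)⁻¹ be the Kalman gain. Then for every n×m real matrix K, log(det(Pᵃ(K*))) ≤ log(det(Pᵃ(K))); that is, the Kalman gain minimizes the logarithm of the generalized variance of the analysis distribution over all gain matrices. -/
open Matrix

/-! Completing the square in the gain gives
`Pᵃ(K) = Pᵃ(K*) + (K - K*) S (K - K*)ᵀ` with `S = H Pᶠ Hᵀ + R`, and `Pᵃ(K*)` is positive definite.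
The determinant is monotone under adding a positive semidefinite matrix `Cᴴ C` to a positive
definite `A`, because `det (A + Cᴴ C) = det A * det (1 + C A⁻¹ Cᴴ)` and the eigenvalues of
`1 + C A⁻¹ Cᴴ` are at least `1`. -/

namespace Matrix

lemma dotProduct_mul_mul_transpose_mulVec {R p q : Type*} [CommSemiring R] [Fintype p]
    [Fintype q] (B : Matrix p q R) (M : Matrix q q R) (x : p → R) :
    x ⬝ᵥ (B * M * Bᵀ) *ᵥ x = (Bᵀ *ᵥ x) ⬝ᵥ M *ᵥ (Bᵀ *ᵥ x) := by
  rw [← mulVec_mulVec, ← mulVec_mulVec, dotProduct_mulVec, mulVec_transpose]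

variable {𝕜 n : Type*} [RCLike 𝕜] [Fintype n] [DecidableEq n]

open ComplexOrder

lemma PosSemidef.one_le_det_one_add {M : Matrix n n 𝕜} (hM : M.PosSemidef) :
    1 ≤ (1 + M).det := by
  have hcfc : cfc (fun x : ℝ => 1 + x) M = 1 + M := by
    rw [cfc_add M (fun _ : ℝ => 1) (fun x => x), cfc_const_one ℝ M hM.1.isSelfAdjoint,
      cfc_id' ℝ M hM.1.isSelfAdjoint]
  rw [← hcfc, hM.1.cfc_eq]
  simp only [IsHermitian.cfc, det_map, det_diagonal, Function.comp_apply, ← RCLike.ofReal_prod]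
  exact_mod_cast Finset.one_le_prod fun i _ => le_add_of_nonneg_right (hM.eigenvalues_nonneg i)

open scoped MatrixOrder in
lemma PosDef.det_le_det_add {A B : Matrix n n 𝕜} (hA : A.PosDef) (hB : B.PosSemidef) :
    A.det ≤ (A + B).det := by
  obtain ⟨C, rfl⟩ := CStarAlgebra.nonneg_iff_eq_star_mul_self.mp hB.nonneg
  rw [star_eq_conjTranspose, det_add_mul _ _ ((isUnit_iff_isUnit_det A).mp hA.isUnit)]
  exact le_mul_of_one_le_right hA.det_pos.le
    (hA.inv.posSemidef.mul_mul_conjTranspose_same C).one_le_det_one_add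

end Matrix

section Kalman

variable {α ι κ : Type*} [CommRing α] [Fintype ι] [Fintype κ] [DecidableEq ι]

def innovationCov (Pf : Matrix ι ι α) (R : Matrix κ κ α) (H : Matrix κ ι α) : Matrix κ κ α :=
  H * Pf * Hᵀ + R

noncomputable def kalmanGain [DecidableEq κ] (Pf : Matrix ι ι α) (R : Matrix κ κ α)
    (H : Matrix κ ι α) : Matrix ι κ α :=
  Pf * Hᵀ * (innovationCov Pf R H)⁻¹

def josephCov (Pf : Matrix ι ι α) (R : Matrix κ κ α) (H : Matrix κ ι α) (K : Matrix ι κ α) :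
    Matrix ι ι α :=
  (1 - K * H) * Pf * (1 - K * H)ᵀ + K * R * Kᵀ

lemma josephCov_eq (Pf : Matrix ι ι α) (R : Matrix κ κ α) (H : Matrix κ ι α)
    (K : Matrix ι κ α) :
    josephCov Pf R H K =
      Pf - K * (H * Pf) - Pf * Hᵀ * Kᵀ + K * innovationCov Pf R H * Kᵀ := by
  simp only [josephCov, innovationCov, transpose_sub, transpose_one, transpose_mul,
    Matrix.sub_mul, Matrix.mul_sub, Matrix.mul_add, Matrix.add_mul, Matrix.one_mul,
    Matrix.mul_one, Matrix.mul_assoc]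
  abel

lemma josephCov_eq_josephCov_kalmanGain_add [DecidableEq κ] {Pf : Matrix ι ι α}
    {R : Matrix κ κ α} (H : Matrix κ ι α) (hPf : Pfᵀ = Pf) (hR : Rᵀ = R)
    (hS : IsUnit (innovationCov Pf R H).det) (K : Matrix ι κ α) :
    josephCov Pf R H K = josephCov Pf R H (kalmanGain Pf R H) +
      (K - kalmanGain Pf R H) * innovationCov Pf R H * (K - kalmanGain Pf R H)ᵀ := by
  set S := innovationCov Pf R H
  set G := kalmanGain Pf R H
  have hGS : G * S = Pf * Hᵀ := nonsing_inv_mul_cancel_right _ _ hS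
  have hSG : S * Gᵀ = H * Pf := by
    have hST : Sᵀ = S := by
      simp only [S, innovationCov, transpose_add, transpose_mul, transpose_transpose, hPf, hR,
        Matrix.mul_assoc]
    rw [← hST, ← transpose_mul, hGS, transpose_mul, hPf, transpose_transpose]
  rw [josephCov_eq, josephCov_eq, ← hSG, ← hGS, transpose_sub]
  simp only [Matrix.sub_mul, Matrix.mul_sub, Matrix.mul_assoc]
  abel

lemma josephCov_posDef {Pf : Matrix ι ι ℝ} {R : Matrix κ κ ℝ} (hPf : Pf.PosDef)
    (hR : R.PosDef) (H : Matrix κ ι ℝ) (K : Matrix ι κ ℝ) : (josephCov Pf R H K).PosDef := by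
  set X := 1 - K * H
  have hpsd : (josephCov Pf R H K).PosSemidef :=
    (hPf.posSemidef.mul_mul_conjTranspose_same X).add
      (hR.posSemidef.mul_mul_conjTranspose_same K)
  refine .of_dotProduct_mulVec_pos hpsd.1 fun x hx => ?_
  -- Hence `Xᵀ x` and `Kᵀ x` do not both vanish.
  have hx' : x = Xᵀ *ᵥ x + Hᵀ *ᵥ (Kᵀ *ᵥ x) := by
    rw [mulVec_mulVec, ← add_mulVec, ← transpose_mul, ← transpose_add, sub_add_cancel,
      transpose_one, one_mulVec]
  rw [star_trivial, josephCov, add_mulVec, dotProduct_add, dotProduct_mul_mul_transpose_mulVec,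
    dotProduct_mul_mul_transpose_mulVec]
  by_cases hK : Kᵀ *ᵥ x = 0
  · rw [hK, mulVec_zero, add_zero] at hx'
    rw [hK, ← hx']
    simpa using hPf.dotProduct_mulVec_pos hx
  · exact add_pos_of_nonneg_of_pos
      (by simpa only [star_trivial] using hPf.posSemidef.dotProduct_mulVec_nonneg (Xᵀ *ᵥ x))
      (by simpa only [star_trivial] using hR.dotProduct_mulVec_pos hK)

end Kalman

theorem kalman_gain_minimizes_log_generalized_variance_general
    (n m : ℕ)
    (Pf : Matrix (Fin n) (Fin n) ℝ) (hPf : Pf.PosDef)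
    (R : Matrix (Fin m) (Fin m) ℝ) (hR : R.PosDef)
    (H : Matrix (Fin m) (Fin n) ℝ)
    (Pa : Matrix (Fin n) (Fin m) ℝ → Matrix (Fin n) (Fin n) ℝ)
    (hPa : ∀ K, Pa K = (1 - K * H) * Pf * (1 - K * H)ᵀ + K * R * Kᵀ)
    (Kstar : Matrix (Fin n) (Fin m) ℝ)
    (hKstar : Kstar = Pf * Hᵀ * (H * Pf * Hᵀ + R)⁻¹) :
    ∀ K : Matrix (Fin n) (Fin m) ℝ,
      Real.log (Pa Kstar).det ≤ Real.log (Pa K).det := by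
  intro K
  have hS : (innovationCov Pf R H).PosDef :=
    .posSemidef_add (hPf.posSemidef.mul_mul_conjTranspose_same H) hR
  have hPaStar : (Pa Kstar).PosDef := hPa Kstar ▸ josephCov_posDef hPf hR H Kstar
  have hPaK : Pa K = Pa Kstar + (K - Kstar) * innovationCov Pf R H * (K - Kstar)ᵀ := by
    rw [hPa, hPa, hKstar]
    exact josephCov_eq_josephCov_kalmanGain_add H hPf.1.eq hR.1.eq hS.det_pos.ne'.isUnit K
  refine Real.log_le_log hPaStar.det_pos ?_
  rw [hPaK]
  exact hPaStar.det_le_det_add (hS.posSemidef.mul_mul_conjTranspose_same _)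

/-- The Kalman gain `K* = Pᶠ Hᵀ (H Pᶠ Hᵀ + R)⁻¹` minimizes the logarithm of the
generalized variance `log (det (Pᵃ(K)))` of the analysis distribution, where
`Pᵃ(K) = (I − K H) Pᶠ (I − K H)ᵀ + K R Kᵀ`, over all gain matrices `K`. -/
theorem kalman_gain_minimizes_log_generalized_variance
    (n m : ℕ) (hn : 0 < n) (hm : 0 < m)
    (Pf : Matrix (Fin n) (Fin n) ℝ) (hPf : Pf.PosDef)
    (R : Matrix (Fin m) (Fin m) ℝ) (hR : R.PosDef)
    (H : Matrix (Fin m) (Fin n) ℝ)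
    (Pa : Matrix (Fin n) (Fin m) ℝ → Matrix (Fin n) (Fin n) ℝ)
    (hPa : ∀ K, Pa K = (1 - K * H) * Pf * (1 - K * H)ᵀ + K * R * Kᵀ)
    (Kstar : Matrix (Fin n) (Fin m) ℝ)
    (hKstar : Kstar = Pf * Hᵀ * (H * Pf * Hᵀ + R)⁻¹) :
    ∀ K : Matrix (Fin n) (Fin m) ℝ,
      Real.log (Pa Kstar).det ≤ Real.log (Pa K).det :=
  kalman_gain_minimizes_log_generalized_variance_general n m Pf hPf R hR H Pa hPa Kstar hKstar
end

section
/- For any n×m real matrices K and E (a direction of perturbation), the real function t ↦ log(det(Pᵃ(K + t·E))) is differentiable at t = 0 with derivative equal to tr((2·K·H·Pᶠ·Hᵀ + 2·K·R − 2·Pᶠ·Hᵀ)ᵀ · (Pᵃ(K))⁻¹ · E). -/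
/-!
Writing `S = H Pᶠ Hᵀ + R` and `W = K S − Pᶠ Hᵀ`, the Joseph form is quadratic in the gain:
`Pᵃ(K + tE) = Pᵃ(K) + t (E Wᵀ + W Eᵀ) + t² E S Eᵀ`. Factoring out `Pᵃ(K)`, which is positive
definite and hence invertible, the determinant along this curve is `det Pᵃ(K)` times a polynomial
`det (1 + t B + t² D)` whose linear coefficient is `tr B`, because modulo `t²` it agrees with
`det (1 + t B)`. Hence the logarithmic derivative at `0` is
`tr (Pᵃ(K)⁻¹ (E Wᵀ + W Eᵀ)) = tr ((2W)ᵀ Pᵃ(K)⁻¹ E)` by symmetry of `Pᵃ(K)`.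
-/

open Matrix Polynomial

namespace Matrix

section Semiring

variable {α n m : Type*} [CommSemiring α] [Fintype n] [Fintype m]

theorem dotProduct_mul_mul_transpose_mulVec_s4 (U : Matrix n m α) (S : Matrix m m α) (x : n → α) :
    x ⬝ᵥ (U * S * Uᵀ) *ᵥ x = (Uᵀ *ᵥ x) ⬝ᵥ S *ᵥ (Uᵀ *ᵥ x) := by
  rw [← mulVec_mulVec, dotProduct_mulVec, ← vecMul_vecMul, ← dotProduct_mulVec,
    ← mulVec_transpose]

theorem IsSymm.trace_mul_add_mul_transpose {A : Matrix n n α} (hA : A.IsSymm)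
    (E W : Matrix n m α) :
    (A * (E * Wᵀ + W * Eᵀ)).trace = 2 * (Wᵀ * A * E).trace := by
  have hfirst : (A * (E * Wᵀ)).trace = (Wᵀ * A * E).trace := by
    rw [← Matrix.mul_assoc, trace_mul_comm, Matrix.mul_assoc]
  have hsecond : (A * (W * Eᵀ)).trace = (A * (E * Wᵀ)).trace := by
    rw [← trace_transpose, transpose_mul, transpose_mul, transpose_transpose, hA.eq,
      trace_mul_comm]
  rw [Matrix.mul_add, trace_add, hsecond, hfirst, two_mul]

end Semiring

section CommRing

variable {R n : Type*} [CommRing R] [Fintype n] [DecidableEq n]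

theorem det_sub_det_mem_of_sub_mem {I : Ideal R} {A B : Matrix n n R}
    (h : ∀ i j, A i j - B i j ∈ I) : A.det - B.det ∈ I := by
  rw [← Ideal.Quotient.eq, RingHom.map_det, RingHom.map_det]
  congr 1
  ext i j
  exact Ideal.Quotient.eq.mpr (h i j)

theorem coeff_det_one_add_X_smul_add_X_sq_smul_one (B D : Matrix n n R) :
    (det (1 + (X : R[X]) • B.map C + (X : R[X]) ^ 2 • D.map C)).coeff 1 = trace B := by
  have hdvd : (X : R[X]) ^ 2 ∣
      det (1 + (X : R[X]) • B.map C + (X : R[X]) ^ 2 • D.map C)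
        - det (1 + (X : R[X]) • B.map C) := by
    refine Ideal.mem_span_singleton.mp (det_sub_det_mem_of_sub_mem fun i j => ?_)
    simp [Ideal.mem_span_singleton]
  rw [← coeff_det_one_add_X_smul_one B, ← sub_eq_zero, ← coeff_sub]
  exact X_pow_dvd_iff.mp hdvd 1 one_lt_two

end CommRing

section Calculus

variable {𝕜 n : Type*} [NontriviallyNormedField 𝕜] [Fintype n] [DecidableEq n]

theorem hasDerivAt_det_add_smul_add_sq_smul (M B D : Matrix n n 𝕜) (hM : IsUnit M.det) :
    HasDerivAt (fun t : 𝕜 => (M + t • B + t ^ 2 • D).det) (M.det * (M⁻¹ * B).trace) 0 := by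
  set p : 𝕜[X] := C M.det *
    det (1 + (X : 𝕜[X]) • (M⁻¹ * B).map C + (X : 𝕜[X]) ^ 2 • (M⁻¹ * D).map C) with hp
  have heval : ∀ t : 𝕜, (M + t • B + t ^ 2 • D).det = p.eval t := by
    intro t
    have hfactor : M + t • B + t ^ 2 • D = M * (1 + t • (M⁻¹ * B) + t ^ 2 • (M⁻¹ * D)) := by
      rw [Matrix.mul_add, Matrix.mul_add, Matrix.mul_one, Matrix.mul_smul, Matrix.mul_smul,
        mul_nonsing_inv_cancel_left _ _ hM, mul_nonsing_inv_cancel_left _ _ hM]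
    rw [hfactor, det_mul, hp, eval_mul, eval_C, ← coe_evalRingHom, RingHom.map_det]
    congr 2
    ext i j
    simp only [add_apply, one_apply, smul_apply, smul_eq_mul, RingHom.mapMatrix_apply,
      coe_evalRingHom, map_apply, X_mul_C, X_pow_mul_C, eval_add, apply_ite (eval t), eval_one,
      eval_zero, eval_mul, eval_C, eval_X, eval_pow]
    ring
  have hcoeff : p.derivative.eval 0 = M.det * (M⁻¹ * B).trace := by
    rw [← coeff_zero_eq_eval_zero, coeff_derivative, hp, coeff_C_mul,
      coeff_det_one_add_X_smul_add_X_sq_smul_one]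
    simp
  simpa only [heval, hcoeff] using p.hasDerivAt 0

theorem hasDerivAt_log_det_add_smul_add_sq_smul (M B D : Matrix n n ℝ) (hM : M.det ≠ 0) :
    HasDerivAt (fun t : ℝ => Real.log (M + t • B + t ^ 2 • D).det) (M⁻¹ * B).trace 0 := by
  convert (hasDerivAt_det_add_smul_add_sq_smul M B D hM.isUnit).log (by simpa using hM) using 1
  simp [hM]

end Calculus

end Matrix

section JosephForm

variable {α n m : Type*} [CommRing α] [Fintype n] [DecidableEq n] [Fintype m]

def josephCovariance (Pf : Matrix n n α) (R : Matrix m m α) (H : Matrix m n α)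
    (K : Matrix n m α) : Matrix n n α :=
  (1 - K * H) * Pf * (1 - K * H)ᵀ + K * R * Kᵀ

theorem josephCovariance_add_smul {Pf : Matrix n n α} {R : Matrix m m α} (hPf : Pf.IsSymm)
    (hR : R.IsSymm) (H : Matrix m n α) (K E : Matrix n m α) (t : α) :
    josephCovariance Pf R H (K + t • E) =
      josephCovariance Pf R H K
        + t • (E * (K * (H * Pf * Hᵀ + R) - Pf * Hᵀ)ᵀ + (K * (H * Pf * Hᵀ + R) - Pf * Hᵀ) * Eᵀ)
        + t ^ 2 • (E * (H * Pf * Hᵀ + R) * Eᵀ) := by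
  simp only [josephCovariance, sub_eq_add_neg, transpose_add, transpose_smul, transpose_neg,
    transpose_mul, transpose_one, hPf.eq, hR.eq, Matrix.add_mul, Matrix.mul_add, Matrix.neg_mul,
    Matrix.mul_neg, Matrix.smul_mul, Matrix.mul_smul, smul_add, smul_neg, Matrix.mul_assoc,
    Matrix.mul_one, Matrix.one_mul, transpose_transpose]
  module

theorem josephCovariance_posDef {Pf : Matrix n n ℝ} {R : Matrix m m ℝ} (hPf : Pf.PosDef)
    (hR : R.PosDef) (H : Matrix m n ℝ) (K : Matrix n m ℝ) :
    (josephCovariance Pf R H K).PosDef := by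
  have hsemidef : (josephCovariance Pf R H K).PosSemidef := by
    simpa only [josephCovariance, conjTranspose_eq_transpose_of_trivial] using
      (hPf.posSemidef.mul_mul_conjTranspose_same (1 - K * H)).add
        (hR.posSemidef.mul_mul_conjTranspose_same K)
  refine .of_dotProduct_mulVec_pos hsemidef.isHermitian fun x hx => ?_
  simp only [star_trivial, josephCovariance, add_mulVec, dotProduct_add,
    dotProduct_mul_mul_transpose_mulVec_s4]
  set y := (1 - K * H)ᵀ *ᵥ x
  set z := Kᵀ *ᵥ x
  have hy : y = x - Hᵀ *ᵥ z := by
    simp only [y, z, transpose_sub, transpose_one, transpose_mul, sub_mulVec, one_mulVec,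
      mulVec_mulVec]
  have hy_nonneg : 0 ≤ y ⬝ᵥ Pf *ᵥ y := by
    simpa using hPf.posSemidef.dotProduct_mulVec_nonneg y
  have hz_nonneg : 0 ≤ z ⬝ᵥ R *ᵥ z := by
    simpa using hR.posSemidef.dotProduct_mulVec_nonneg z
  by_cases hz : z = 0
  · have hy_pos : 0 < y ⬝ᵥ Pf *ᵥ y := by
      simpa [hy, hz] using hPf.dotProduct_mulVec_pos hx
    linarith
  · have hz_pos : 0 < z ⬝ᵥ R *ᵥ z := by
      simpa using hR.dotProduct_mulVec_pos hz
    linarith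

end JosephForm

theorem log_det_analysis_covariance_hasDerivAt_general
    (n m : ℕ)
    (Pf : Matrix (Fin n) (Fin n) ℝ) (hPf : Pf.PosDef)
    (R : Matrix (Fin m) (Fin m) ℝ) (hR : R.PosDef)
    (H : Matrix (Fin m) (Fin n) ℝ)
    (Pa : Matrix (Fin n) (Fin m) ℝ → Matrix (Fin n) (Fin n) ℝ)
    (hPa : ∀ K, Pa K = (1 - K * H) * Pf * (1 - K * H)ᵀ + K * R * Kᵀ) :
    ∀ K E : Matrix (Fin n) (Fin m) ℝ,
      HasDerivAt (fun t : ℝ => Real.log (Pa (K + t • E)).det)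
        (((2 : ℝ) • (K * H * Pf * Hᵀ) + (2 : ℝ) • (K * R)
            - (2 : ℝ) • (Pf * Hᵀ))ᵀ * (Pa K)⁻¹ * E).trace 0 := by
  intro K E
  obtain rfl : Pa = josephCovariance Pf R H := funext hPa
  have hPf_symm : Pf.IsSymm := isHermitian_iff_isSymm.mp hPf.isHermitian
  have hR_symm : R.IsSymm := isHermitian_iff_isSymm.mp hR.isHermitian
  have hPa_pos := josephCovariance_posDef hPf hR H K
  have hPa_inv_symm : (josephCovariance Pf R H K)⁻¹.IsSymm :=
    isHermitian_iff_isSymm.mp hPa_pos.inv.isHermitian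
  set W := K * (H * Pf * Hᵀ + R) - Pf * Hᵀ
  have hgrad : (2 : ℝ) • (K * H * Pf * Hᵀ) + (2 : ℝ) • (K * R) - (2 : ℝ) • (Pf * Hᵀ) =
      (2 : ℝ) • W := by
    simp only [W, Matrix.mul_add, Matrix.mul_assoc, smul_sub, smul_add]
  have hexpand : ∀ t : ℝ, josephCovariance Pf R H (K + t • E) = josephCovariance Pf R H K
      + t • (E * Wᵀ + W * Eᵀ) + t ^ 2 • (E * (H * Pf * Hᵀ + R) * Eᵀ) :=
    josephCovariance_add_smul hPf_symm hR_symm H K E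
  have hderiv := hasDerivAt_log_det_add_smul_add_sq_smul (josephCovariance Pf R H K)
    (E * Wᵀ + W * Eᵀ) (E * (H * Pf * Hᵀ + R) * Eᵀ) hPa_pos.det_pos.ne'
  simp only [← hexpand] at hderiv
  rwa [hgrad, transpose_smul, smul_mul, smul_mul, trace_smul, smul_eq_mul,
    ← hPa_inv_symm.trace_mul_add_mul_transpose]

/-- For any gain matrix `K` and any direction `E`, the function
`t ↦ log (det (Pᵃ(K + t E)))` is differentiable at `t = 0`, with derivative
`tr ((2 K H Pᶠ Hᵀ + 2 K R − 2 Pᶠ Hᵀ)ᵀ (Pᵃ(K))⁻¹ E)`, where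
`Pᵃ(K) = (I − K H) Pᶠ (I − K H)ᵀ + K R Kᵀ`. -/
theorem log_det_analysis_covariance_hasDerivAt
    (n m : ℕ) (hn : 0 < n) (hm : 0 < m)
    (Pf : Matrix (Fin n) (Fin n) ℝ) (hPf : Pf.PosDef)
    (R : Matrix (Fin m) (Fin m) ℝ) (hR : R.PosDef)
    (H : Matrix (Fin m) (Fin n) ℝ)
    (Pa : Matrix (Fin n) (Fin m) ℝ → Matrix (Fin n) (Fin n) ℝ)
    (hPa : ∀ K, Pa K = (1 - K * H) * Pf * (1 - K * H)ᵀ + K * R * Kᵀ) :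
    ∀ K E : Matrix (Fin n) (Fin m) ℝ,
      HasDerivAt (fun t : ℝ => Real.log (Pa (K + t • E)).det)
        (((2 : ℝ) • (K * H * Pf * Hᵀ) + (2 : ℝ) • (K * R)
            - (2 : ℝ) • (Pf * Hᵀ))ᵀ * (Pa K)⁻¹ * E).trace 0 :=
  log_det_analysis_covariance_hasDerivAt_general n m Pf hPf R hR H Pa hPa
end
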